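/- arXiv:1208.4900 — 3 statements merged into one kernel-verified Lean document; each statement's English description precedes it below -/
import Mathlib

section
/- Let n be a natural number, w : Fin n → ℤ a self-writhe vector, and ℓ : Fin n → Fin n → ℤ a symmetric matrix (ℓ i j = ℓ j i for all i, j) with zero diagonal, encoding the pairwise linking numbers of an n-component framed oriented link. For an orientation sign function ε : Fin n → ℤ define the framing number f(ε) = (Σ_i w i) + Σ_{i ≠ j} (ε i) * (ε j) * (ℓ i j). For a subset S : Finset (Fin n) let ε_S : Fin n → ℤ be given by ε_S i = -1 if i ∈ S and ε_S i = 1 otherwise, and let lk(S, Sᶜ) = Σ_{i ∈ S} Σ_{j ∉ S} ℓ i j. Then for every S : Finset (Fin n), f(ε_S) = f(ε_∅) - 4 * lk(S, Sᶜ). (This is the key claim in the proof of Lemma 4: reversing the orientation on the sublink S, while keeping the framing, changes the framing number by -4 lk(S, L - S).) -/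
open Finset

/-- The framing number of an `n`-component framed oriented link with self-writhe
vector `w`, linking matrix `ℓ`, and orientation signs `ε`:
`f(ε) = (Σ_i w i) + Σ_{i ≠ j} (ε i)(ε j)(ℓ i j)`. -/
def framingNumber (n : ℕ) (w : Fin n → ℤ) (ℓ : Fin n → Fin n → ℤ)
    (ε : Fin n → ℤ) : ℤ :=
  (∑ i, w i) + ∑ i, ∑ j ∈ Finset.univ.filter (fun j => j ≠ i), ε i * ε j * ℓ i j

/-- The global linking number of the sublink `S` with its complementary sublink:
`lk(S, Sᶜ) = Σ_{i ∈ S} Σ_{j ∉ S} ℓ i j`. -/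
def lkCompl (n : ℕ) (ℓ : Fin n → Fin n → ℤ) (S : Finset (Fin n)) : ℤ :=
  ∑ i ∈ S, ∑ j ∈ Sᶜ, ℓ i j

/-- The orientation obtained by reversing the orientation on the sublink `S`:
`ε_S i = -1` if `i ∈ S`, and `ε_S i = 1` otherwise. -/
def epsOfSublink (n : ℕ) (S : Finset (Fin n)) : Fin n → ℤ :=
  fun i => if i ∈ S then -1 else 1

/-- Reversing the orientation on a sublink `S`, keeping the framing, changes the
framing number by `-4 lk(S, L - S)`. -/
theorem framingNumber_reverse_sublink (n : ℕ) (w : Fin n → ℤ)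
    (ℓ : Fin n → Fin n → ℤ)
    (hsymm : ∀ i j, ℓ i j = ℓ j i) (hdiag : ∀ i, ℓ i i = 0)
    (S : Finset (Fin n)) :
    framingNumber n w ℓ (epsOfSublink n S) =
      framingNumber n w ℓ (epsOfSublink n ∅) - 4 * lkCompl n ℓ S := by
  have hfull : ∀ ε : Fin n → ℤ,
      framingNumber n w ℓ ε = (∑ i, w i) + ∑ i, ∑ j, ε i * ε j * ℓ i j := by
    intro ε
    unfold framingNumber
    congr 1
    refine Finset.sum_congr rfl fun i _ => ?_
    rw [← Finset.sum_filter_add_sum_filter_not Finset.univ (fun j => j ≠ i)]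
    simp [Finset.filter_eq', hdiag]
  rw [hfull, hfull]
  unfold lkCompl epsOfSublink
  simp only [Finset.notMem_empty, if_false, one_mul]
  have split : ∀ G : Fin n → ℤ, ∑ i, G i = ∑ i ∈ S, G i + ∑ i ∈ Sᶜ, G i :=
    fun G => (Finset.sum_add_sum_compl S G).symm
  have e1 : ∀ i ∈ S, (∑ j, (if i ∈ S then (-1:ℤ) else 1) * (if j ∈ S then -1 else 1) * ℓ i j)
      = ∑ j ∈ S, ℓ i j - ∑ j ∈ Sᶜ, ℓ i j := by
    intro i hi
    rw [split (fun j => (if i ∈ S then (-1:ℤ) else 1) * (if j ∈ S then -1 else 1) * ℓ i j),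
        Finset.sum_congr rfl (fun j hj => by simp [hi, hj] : ∀ j ∈ S, _ = ℓ i j),
        Finset.sum_congr rfl (fun j hj => by simp [hi, Finset.mem_compl.mp hj] : ∀ j ∈ Sᶜ, _ = -ℓ i j),
        Finset.sum_neg_distrib]
    ring
  have e2 : ∀ i ∈ Sᶜ, (∑ j, (if i ∈ S then (-1:ℤ) else 1) * (if j ∈ S then -1 else 1) * ℓ i j)
      = ∑ j ∈ Sᶜ, ℓ i j - ∑ j ∈ S, ℓ i j := by
    intro i hi
    have hi' := Finset.mem_compl.mp hi
    rw [split (fun j => (if i ∈ S then (-1:ℤ) else 1) * (if j ∈ S then -1 else 1) * ℓ i j),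
        Finset.sum_congr rfl (fun j hj => by simp [hi', hj] : ∀ j ∈ S, _ = -ℓ i j),
        Finset.sum_congr rfl (fun j hj => by simp [hi', Finset.mem_compl.mp hj] : ∀ j ∈ Sᶜ, _ = ℓ i j),
        Finset.sum_neg_distrib]
    ring
  have hCS : ∑ i ∈ Sᶜ, ∑ j ∈ S, ℓ i j = ∑ i ∈ S, ∑ j ∈ Sᶜ, ℓ i j := by
    rw [Finset.sum_comm]
    exact Finset.sum_congr rfl fun i _ => Finset.sum_congr rfl fun j _ => hsymm j i
  rw [split (fun i => ∑ j, (if i ∈ S then (-1:ℤ) else 1) * (if j ∈ S then -1 else 1) * ℓ i j),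
      split (fun i => ∑ j, ℓ i j),
      Finset.sum_congr rfl e1, Finset.sum_congr rfl e2,
      Finset.sum_congr rfl (fun i (_ : i ∈ S) => split (fun j => ℓ i j)),
      Finset.sum_congr rfl (fun i (_ : i ∈ Sᶜ) => split (fun j => ℓ i j)),
      Finset.sum_sub_distrib, Finset.sum_sub_distrib,
      Finset.sum_add_distrib, Finset.sum_add_distrib]
  linarith [hCS]
end

section
/- Let n be a natural number, w : Fin n → ℤ, and ℓ : Fin n → Fin n → ℤ symmetric with zero diagonal, encoding an n-component framed oriented link; define f(ε) = (Σ_i w i) + Σ_{i ≠ j} (ε i)(ε j)(ℓ i j) and lk(S, Sᶜ) = Σ_{i ∈ S} Σ_{j ∉ S} ℓ i j. Assume the link is 0-framed, i.e. f(ε) = 0 for the constant orientation ε ≡ 1. Then in the Laurent polynomial ring ℤ[a, a⁻¹] (LaurentPolynomial ℤ, with T k denoting a^k): Σ over all ε : Fin n → ℤ satisfying (∀ i, ε i = 1 ∨ ε i = -1) of (-1)^n * T (f(ε)) equals (-1)^n * Σ over all S : Finset (Fin n) of T (-4 * lk(S, Sᶜ)). (This is Lemma 4: g τ(p(L)) =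 (-1)^{com L} Σ_{S ⊆ L} a^{-4 lk(S, L-S)}, where τ(L) is the formal sum of all orientations of L and g(L') = (-1)^{com L'} a^{fr(L')}.) -/
open Finset LaurentPolynomial

/-- The set of all orientation sign functions `ε : Fin n → ℤ` with each
`ε i ∈ {1, -1}`. -/
def signFuns (n : ℕ) : Finset (Fin n → ℤ) :=
  Fintype.piFinset fun _ => ({1, -1} : Finset ℤ)

lemma framing_key (n : ℕ) (w : Fin n → ℤ) (ℓ : Fin n → Fin n → ℤ)
    (hsymm : ∀ i j, ℓ i j = ℓ j i) (hdiag : ∀ i, ℓ i i = 0)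
    (h0 : framingNumber n w ℓ (fun _ => 1) = 0)
    (ε : Fin n → ℤ) (hε : ∀ i, ε i = 1 ∨ ε i = -1) :
    framingNumber n w ℓ ε
      = -4 * lkCompl n ℓ (Finset.univ.filter fun i => ε i = -1) := by
  set S := Finset.univ.filter fun i => ε i = -1 with hS
  have hεS : ∀ i ∈ S, ε i = -1 := by intro i hi; simpa [hS] using hi
  have hεSc : ∀ i ∈ Sᶜ, ε i = 1 := by
    intro i hi
    rcases hε i with h | h
    · exact h
    · exfalso; simp [hS, h] at hi
  have hfull : ∀ (δ : Fin n → ℤ),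
      (∑ i, ∑ j ∈ Finset.univ.filter (fun j => j ≠ i), δ i * δ j * ℓ i j)
        = ∑ i, ∑ j, δ i * δ j * ℓ i j := by
    intro δ
    refine Finset.sum_congr rfl fun i _ => ?_
    rw [Finset.filter_ne', Finset.sum_erase]
    simp [hdiag i]
  have hsplit : ∀ g : Fin n → Fin n → ℤ, (∑ i, ∑ j, g i j)
      = ((∑ i ∈ S, ∑ j ∈ S, g i j) + ∑ i ∈ S, ∑ j ∈ Sᶜ, g i j)
        + ((∑ i ∈ Sᶜ, ∑ j ∈ S, g i j) + ∑ i ∈ Sᶜ, ∑ j ∈ Sᶜ, g i j) := by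
    intro g
    rw [← Finset.sum_add_sum_compl S (fun i => ∑ j, g i j)]
    congr 1 <;>
    · rw [← Finset.sum_add_distrib]
      exact Finset.sum_congr rfl fun i _ => (Finset.sum_add_sum_compl S _).symm
  have hc : ∑ i ∈ Sᶜ, ∑ j ∈ S, ℓ i j = ∑ i ∈ S, ∑ j ∈ Sᶜ, ℓ i j := by
    rw [Finset.sum_comm]
    exact Finset.sum_congr rfl fun i _ => Finset.sum_congr rfl fun j _ => hsymm j i
  have e1 : ∑ i ∈ S, ∑ j ∈ S, ε i * ε j * ℓ i j = ∑ i ∈ S, ∑ j ∈ S, ℓ i j :=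
    Finset.sum_congr rfl fun i hi => Finset.sum_congr rfl fun j hj => by
      rw [hεS i hi, hεS j hj]; ring
  have e2 : ∑ i ∈ S, ∑ j ∈ Sᶜ, ε i * ε j * ℓ i j = -∑ i ∈ S, ∑ j ∈ Sᶜ, ℓ i j := by
    rw [← Finset.sum_neg_distrib]
    exact Finset.sum_congr rfl fun i hi => by
      rw [← Finset.sum_neg_distrib]
      exact Finset.sum_congr rfl fun j hj => by rw [hεS i hi, hεSc j hj]; ring
  have e3 : ∑ i ∈ Sᶜ, ∑ j ∈ S, ε i * ε j * ℓ i j = -∑ i ∈ Sᶜ, ∑ j ∈ S, ℓ i j := by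
    rw [← Finset.sum_neg_distrib]
    exact Finset.sum_congr rfl fun i hi => by
      rw [← Finset.sum_neg_distrib]
      exact Finset.sum_congr rfl fun j hj => by rw [hεSc i hi, hεS j hj]; ring
  have e4 : ∑ i ∈ Sᶜ, ∑ j ∈ Sᶜ, ε i * ε j * ℓ i j = ∑ i ∈ Sᶜ, ∑ j ∈ Sᶜ, ℓ i j :=
    Finset.sum_congr rfl fun i hi => Finset.sum_congr rfl fun j hj => by
      rw [hεSc i hi, hεSc j hj]; ring
  have h0' : (∑ i, w i) + ∑ i, ∑ j, ℓ i j = 0 := by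
    have := h0
    unfold framingNumber at this
    rw [hfull (fun _ => 1)] at this
    simpa using this
  unfold framingNumber lkCompl
  rw [hfull ε, hsplit (fun i j => ε i * ε j * ℓ i j), e1, e2, e3, e4, hc]
  rw [hsplit ℓ, hc] at h0'
  linarith


/-- Lemma 4: for a `0`-framed link,
`g τ(p(L)) = (-1)^{com L} Σ_{S ⊆ L} a^{-4 lk(S, L-S)}` in `ℤ[a, a⁻¹]`. -/
theorem gTau_eq_sum_sublinks (n : ℕ) (w : Fin n → ℤ)
    (ℓ : Fin n → Fin n → ℤ)
    (hsymm : ∀ i j, ℓ i j = ℓ j i) (hdiag : ∀ i, ℓ i i = 0)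
    (h0 : framingNumber n w ℓ (fun _ => 1) = 0) :
    (∑ ε ∈ signFuns n,
        ((-1 : LaurentPolynomial ℤ) ^ n * T (framingNumber n w ℓ ε))) =
      (-1 : LaurentPolynomial ℤ) ^ n *
        ∑ S : Finset (Fin n), T (-4 * lkCompl n ℓ S) := by
  rw [← Finset.mul_sum]
  congr 1
  refine Finset.sum_nbij' (i := fun ε => Finset.univ.filter fun i => ε i = -1)
    (j := fun S => fun i => if i ∈ S then (-1 : ℤ) else 1) ?_ ?_ ?_ ?_ ?_
  · intro ε hε; exact Finset.mem_univ _
  · intro S hS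
    simp only [signFuns, Fintype.mem_piFinset]
    intro i; by_cases h : i ∈ S <;> simp [h]
  · intro ε hε
    have hε' : ∀ i, ε i = 1 ∨ ε i = -1 := by
      simpa [signFuns, Fintype.mem_piFinset] using hε
    funext i
    rcases hε' i with h | h <;> simp [h]
  · intro S hS
    ext i
    by_cases h : i ∈ S <;> simp [h]
  · intro ε hε
    have hε' : ∀ i, ε i = 1 ∨ ε i = -1 := by
      simpa [signFuns, Fintype.mem_piFinset] using hε
    rw [framing_key n w ℓ hsymm hdiag h0 ε hε']
end

section
/- Let n ≥ 1, w : Fin n → ℤ, and ℓ : Fin n → Fin n → ℤ symmetric with zero diagonal; define f(ε) = (Σ_i w i) + Σ_{i ≠ j} (ε i)(ε j)(ℓ i j) and lk(S, Sᶜ) = Σ_{i ∈ S} Σ_{j ∉ S} ℓ i j. Assume f(ε) = 0 for the constant orientation ε ≡ 1, and fix i₀ : Fin n. Then in ℤ[a, a⁻¹] (LaurentPolynomial ℤ): Σ over all ε : Fin n → ℤ satisfying (∀ i, ε i = 1 ∨ ε i = -1) of (-1)^n * T (f(ε)) equals (-2) * (-1)^(n-1) * Σ over all S : Finset (Fin n)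 with i₀ ∉ S of T (-4 * lk(S, Sᶜ)). (This is the combinatorial content of Theorem 5: g τ(L) = -2 F_L(a, -a - a⁻¹) combined with F_L(a, -a - a⁻¹) = ((-1)^{com(L)-1}/2) Σ_{S ⊆ L} a^{-4 lk(S, L-S)}, the Lickorish–Millett–Turaev formula for the Kauffman polynomial at z = -a - a⁻¹ of a 0-framed link.) -/
open Finset LaurentPolynomial

lemma double_sum_eq (n : ℕ) (ℓ : Fin n → Fin n → ℤ) (hdiag : ∀ i, ℓ i i = 0)
    (ε : Fin n → ℤ) :
    ∑ i, ∑ j ∈ Finset.univ.filter (fun j => j ≠ i), ε i * ε j * ℓ i j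
      = ∑ i, ∑ j, ε i * ε j * ℓ i j := by
  refine Finset.sum_congr rfl fun i _ => ?_
  rw [Finset.filter_ne', Finset.sum_erase]
  rw [hdiag, mul_zero]

lemma quad_eq (n : ℕ) (ℓ : Fin n → Fin n → ℤ)
    (hsymm : ∀ i j, ℓ i j = ℓ j i) (S : Finset (Fin n)) :
    ∑ i, ∑ j, (if i ∈ S then (-1:ℤ) else 1) * (if j ∈ S then (-1:ℤ) else 1) * ℓ i j
      = (∑ i, ∑ j, ℓ i j) - 4 * lkCompl n ℓ S := by
  have key : ∀ g : Fin n → Fin n → ℤ,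
      ∑ i, ∑ j, g i j = (∑ i ∈ S, ∑ j ∈ S, g i j) + (∑ i ∈ S, ∑ j ∈ Sᶜ, g i j)
        + ((∑ i ∈ Sᶜ, ∑ j ∈ S, g i j) + (∑ i ∈ Sᶜ, ∑ j ∈ Sᶜ, g i j)) := by
    intro g
    have inner : ∀ T : Finset (Fin n), ∑ i ∈ T, ∑ j, g i j
        = ∑ i ∈ T, ∑ j ∈ S, g i j + ∑ i ∈ T, ∑ j ∈ Sᶜ, g i j := fun T => by
      rw [← Finset.sum_add_distrib]
      exact Finset.sum_congr rfl fun i _ => (Finset.sum_add_sum_compl S (g i)).symm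
    rw [← Finset.sum_add_sum_compl S (fun i => ∑ j, g i j), inner S, inner Sᶜ]
  have hlk' : ∑ i ∈ Sᶜ, ∑ j ∈ S, ℓ i j = lkCompl n ℓ S := by
    rw [Finset.sum_comm, lkCompl]
    exact Finset.sum_congr rfl fun i _ => Finset.sum_congr rfl fun j _ => hsymm j i
  rw [key (fun i j => _ * _ * ℓ i j), key ℓ, lkCompl] at *
  have e1 : ∑ i ∈ S, ∑ j ∈ S, (if i ∈ S then (-1:ℤ) else 1) * (if j ∈ S then (-1:ℤ) else 1) * ℓ i j
      = ∑ i ∈ S, ∑ j ∈ S, ℓ i j := by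
    refine Finset.sum_congr rfl fun i hi => Finset.sum_congr rfl fun j hj => ?_
    simp [hi, hj]
  have e2 : ∑ i ∈ S, ∑ j ∈ Sᶜ, (if i ∈ S then (-1:ℤ) else 1) * (if j ∈ S then (-1:ℤ) else 1) * ℓ i j
      = -∑ i ∈ S, ∑ j ∈ Sᶜ, ℓ i j := by
    rw [← Finset.sum_neg_distrib]
    refine Finset.sum_congr rfl fun i hi => ?_
    rw [← Finset.sum_neg_distrib]
    refine Finset.sum_congr rfl fun j hj => ?_
    simp [hi, (Finset.mem_compl.mp hj)]
  have e3 : ∑ i ∈ Sᶜ, ∑ j ∈ S, (if i ∈ S then (-1:ℤ) else 1) * (if j ∈ S then (-1:ℤ) else 1) * ℓ i j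
      = -∑ i ∈ Sᶜ, ∑ j ∈ S, ℓ i j := by
    rw [← Finset.sum_neg_distrib]
    refine Finset.sum_congr rfl fun i hi => ?_
    rw [← Finset.sum_neg_distrib]
    refine Finset.sum_congr rfl fun j hj => ?_
    simp [hj, (Finset.mem_compl.mp hi)]
  have e4 : ∑ i ∈ Sᶜ, ∑ j ∈ Sᶜ, (if i ∈ S then (-1:ℤ) else 1) * (if j ∈ S then (-1:ℤ) else 1) * ℓ i j
      = ∑ i ∈ Sᶜ, ∑ j ∈ Sᶜ, ℓ i j := by
    refine Finset.sum_congr rfl fun i hi => Finset.sum_congr rfl fun j hj => ?_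
    simp [(Finset.mem_compl.mp hi), (Finset.mem_compl.mp hj)]
  rw [e1, e2, e3, e4, hlk']
  ring

lemma framing_eq (n : ℕ) (w : Fin n → ℤ) (ℓ : Fin n → Fin n → ℤ)
    (hsymm : ∀ i j, ℓ i j = ℓ j i) (hdiag : ∀ i, ℓ i i = 0)
    (h0 : framingNumber n w ℓ (fun _ => 1) = 0) (S : Finset (Fin n)) :
    framingNumber n w ℓ (fun i => if i ∈ S then -1 else 1) = -4 * lkCompl n ℓ S := by
  have h1 := double_sum_eq n ℓ hdiag (fun _ => 1)
  have h2 := double_sum_eq n ℓ hdiag (fun i => if i ∈ S then (-1:ℤ) else 1)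
  unfold framingNumber at *
  simp only [one_mul] at h0 h1
  rw [h2, quad_eq n ℓ hsymm S]
  rw [h1] at h0
  linarith

lemma lk_compl (n : ℕ) (ℓ : Fin n → Fin n → ℤ) (hsymm : ∀ i j, ℓ i j = ℓ j i)
    (S : Finset (Fin n)) : lkCompl n ℓ Sᶜ = lkCompl n ℓ S := by
  unfold lkCompl
  rw [compl_compl, Finset.sum_comm]
  exact Finset.sum_congr rfl fun i _ => Finset.sum_congr rfl fun j _ => hsymm j i


/-- Theorem 5 (combinatorial content): `g τ(L) = -2 F_L(a, -a - a⁻¹)` together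
with the Lickorish–Millett–Turaev formula
`F_L(a, -a - a⁻¹) = ((-1)^{com(L)-1}/2) Σ_{S ⊆ L} a^{-4 lk(S, L-S)}`
for a `0`-framed link. -/
theorem lickorish_millett_turaev (n : ℕ) (hn : 1 ≤ n) (w : Fin n → ℤ)
    (ℓ : Fin n → Fin n → ℤ)
    (hsymm : ∀ i j, ℓ i j = ℓ j i) (hdiag : ∀ i, ℓ i i = 0)
    (h0 : framingNumber n w ℓ (fun _ => 1) = 0) (i₀ : Fin n) :
    (∑ ε ∈ signFuns n,
        ((-1 : LaurentPolynomial ℤ) ^ n * T (framingNumber n w ℓ ε))) =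
      (-2 : LaurentPolynomial ℤ) * (-1 : LaurentPolynomial ℤ) ^ (n - 1) *
        ∑ S ∈ Finset.univ.filter (fun S : Finset (Fin n) => i₀ ∉ S),
          T (-4 * lkCompl n ℓ S) := by

  have step1 : ∑ ε ∈ signFuns n, (T (framingNumber n w ℓ ε) : LaurentPolynomial ℤ)
      = ∑ S : Finset (Fin n), T (-4 * lkCompl n ℓ S) := by
    refine Finset.sum_bij' (fun ε _ => Finset.univ.filter (fun k => ε k = -1))
      (fun S _ => fun i => if i ∈ S then -1 else 1) ?_ ?_ ?_ ?_ ?_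
    · intro ε hε; exact Finset.mem_univ _
    · intro S hS
      simp only [signFuns, Fintype.mem_piFinset, Finset.mem_insert, Finset.mem_singleton]
      intro i; split <;> simp
    · intro ε hε
      funext k
      simp only [signFuns, Fintype.mem_piFinset, Finset.mem_insert,
        Finset.mem_singleton] at hε
      simp only [Finset.mem_filter, Finset.mem_univ, true_and]
      rcases hε k with h | h <;> simp [h]
    · intro S hS
      ext k
      simp only [Finset.mem_filter, Finset.mem_univ, true_and]
      split <;> simp_all
    · intro ε hε
      have hεeq : ε = fun i => if i ∈ Finset.univ.filter (fun k => ε k = -1) then (-1:ℤ) else 1 := by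
        funext k
        simp only [signFuns, Fintype.mem_piFinset, Finset.mem_insert,
          Finset.mem_singleton] at hε
        simp only [Finset.mem_filter, Finset.mem_univ, true_and]
        rcases hε k with h | h <;> simp [h]
      conv_lhs => rw [hεeq]
      rw [framing_eq n w ℓ hsymm hdiag h0]
  have step2 : ∑ S ∈ Finset.univ.filter (fun S : Finset (Fin n) => i₀ ∈ S),
        (T (-4 * lkCompl n ℓ S) : LaurentPolynomial ℤ)
      = ∑ S ∈ Finset.univ.filter (fun S : Finset (Fin n) => i₀ ∉ S),
        T (-4 * lkCompl n ℓ S) := by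
    refine Finset.sum_bij' (fun S _ => Sᶜ) (fun S _ => Sᶜ) ?_ ?_ ?_ ?_ ?_
    · intro S hS
      simp only [Finset.mem_filter, Finset.mem_univ, true_and, Finset.mem_compl,
        not_not] at hS ⊢
      exact hS
    · intro S hS
      simp only [Finset.mem_filter, Finset.mem_univ, true_and, Finset.mem_compl,
        not_not] at hS ⊢
      exact hS
    · intro S _; exact compl_compl S
    · intro S _; exact compl_compl S
    · intro S _; rw [lk_compl n ℓ hsymm]
  rw [← Finset.mul_sum, step1,
    ← Finset.sum_filter_add_sum_filter_not Finset.univ (fun S : Finset (Fin n) => i₀ ∉ S)]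
  simp only [not_not]
  rw [step2]
  obtain ⟨m, rfl⟩ : ∃ m, n = m + 1 := ⟨n - 1, (Nat.succ_pred_eq_of_pos hn).symm⟩
  rw [Nat.add_sub_cancel, pow_succ]
  ring
end
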